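/- Let the penalized cost function c^M be defined by c^M_{ij} = c_{ij} + M if i and j lie in different clusters or one of them is the depot, and c^M_{ij} = c_{ij} otherwise. Then for every feasible CluVRP solution s with m routes and N clusters, the penalized cost satisfies c^M(s) = c(s) + M(m + N), i.e., the penalty contribution is a constant independent of s; hence s minimizes c^M over feasible CluVRP solutions if and only if it minimizes c. -/

import Mathlib

/-!
A route `0, v₁, …, vₖ, 0` pays the penalty on its two depot edges and on every edge where the
cluster changes. By contiguity each cluster forms one block of consecutive customers of a single
route, so a route meeting `d` clusters changes cluster `d - 1` times and pays `d + 1` penalties.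
The routes meet each of the `N` clusters exactly once, which gives `m + N` penalties in total.
-/

/-- Cost of a walk given as a list of vertices. -/
def pathCost {α : Type*} (c : α → α → ℝ) : List α → ℝ
  | a :: b :: t => c a b + pathCost c (b :: t)
  | _ => 0

/-- Cost of a single closed route based at the depot (`none`). -/
def routeCost {C : Type*} (c : Option C → Option C → ℝ) (r : List C) : ℝ :=
  pathCost c ((none :: r.map some) ++ [none])

/-- Total cost of a solution. -/
def solCost {C : Type*} {m : ℕ} (c : Option C → Option C → ℝ)
    (routes : Fin m → List C) : ℝ :=
  ∑ i, routeCost c (routes i)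

/-- The penalized cost function `c^M`: add `M` on edges whose endpoints lie in
different clusters or one of whose endpoints is the depot. -/
def penalizedCost {C : Type*} {N : ℕ} [DecidableEq C] (clu : C → Fin N)
    (c : Option C → Option C → ℝ) (M : ℝ) (a b : Option C) : ℝ :=
  c a b + (if a = none ∨ b = none ∨ Option.map clu a ≠ Option.map clu b then M else 0)

/-- Feasibility for the CluVRP with m nonempty routes: every customer visited
exactly once, capacities respected, clusters contiguous. -/
def CluVRPFeasible {C : Type*} {N m : ℕ} (Q : ℚ) (q : C → ℚ) (clu : C → Fin N)
    (routes : Fin m → List C) : Prop :=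
  (∀ v : C, ∃! i : Fin m, v ∈ routes i) ∧
  (∀ i, (routes i).Nodup) ∧
  (∀ i, routes i ≠ []) ∧
  (∀ i, ((routes i).map q).sum ≤ Q) ∧
  (∀ k : Fin N, ∃ (i : Fin m) (l₁ l₂ l₃ : List C),
    routes i = l₁ ++ l₂ ++ l₃ ∧ ∀ v, v ∈ l₂ ↔ clu v = k)

namespace List

variable {α : Type*}

/-- Every value occupies one block of consecutive entries: no `a, …, b, …, a` with `b ≠ a`. -/
def BlockContiguous (l : List α) : Prop :=
  ∀ a b, [a, b, a] <+ l → b = a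

theorem BlockContiguous.of_cons {a : α} {l : List α} (h : (a :: l).BlockContiguous) :
    l.BlockContiguous :=
  fun x y hs => h x y (hs.cons a)

theorem BlockContiguous.notMem_of_ne {a b : α} {l : List α}
    (h : (a :: b :: l).BlockContiguous) (hab : a ≠ b) : a ∉ b :: l := by
  rintro (_ | ⟨_, ha⟩)
  · exact hab rfl
  · exact hab (h a b ((singleton_sublist.2 ha).cons_cons b |>.cons_cons a)).symm

theorem eq_of_sublist_append_append {k b : α} {A B C : List α} (hA : k ∉ A)
    (hB : ∀ x ∈ B, x = k) (hC : k ∉ C) (h : [k, b, k] <+ A ++ B ++ C) : b = k := by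
  obtain ⟨P, R, hPR, hP, hR⟩ := sublist_append_iff.1 h
  obtain ⟨P, Q, rfl, hP, hQ⟩ := sublist_append_iff.1 hP
  have hkP : k ∉ P := fun hk => hA (hP.subset hk)
  have hkR : k ∉ R := fun hk => hC (hR.subset hk)
  have hbQ : b ∈ Q := by
    rcases P with _ | ⟨p, P⟩
    · rcases Q with _ | ⟨x, _ | ⟨y, Q⟩⟩
      · simp only [nil_append] at hPR
        simp [← hPR] at hkR
      · simp only [nil_append, singleton_append, cons.injEq] at hPR
        simp [← hPR.2] at hkR
      · simp only [nil_append, cons_append, cons.injEq] at hPR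
        simp [hPR.2.1]
    · simp only [cons_append, cons.injEq] at hPR
      simp [hPR.1] at hkP
  exact hB b (hQ.subset hbQ)

variable [DecidableEq α]

def changeCount : List α → ℕ
  | a :: b :: t => (if a = b then 0 else 1) + changeCount (b :: t)
  | _ => 0

theorem BlockContiguous.changeCount_add_one {l : List α} (h : l.BlockContiguous) (hl : l ≠ []) :
    l.changeCount + 1 = l.toFinset.card := by
  obtain ⟨a, t, rfl⟩ := exists_cons_of_ne_nil hl
  induction t generalizing a with
  | nil => simp [changeCount]
  | cons b t ih =>
    have ih := ih b h.of_cons (cons_ne_nil b t)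
    by_cases hab : a = b
    · subst hab
      simpa [changeCount] using ih
    · have ha : a ∉ (b :: t).toFinset := by simpa using h.notMem_of_ne hab
      rw [toFinset_cons, Finset.card_insert_of_notMem ha, ← ih]
      simp only [changeCount, hab, if_false]
      omega

end List

section Penalty

variable {C : Type*} [DecidableEq C] {N : ℕ} (clu : C → Fin N) (c : Option C → Option C → ℝ)
  (M : ℝ)

theorem penalizedCost_some_some (v w : C) :
    penalizedCost clu c M (some v) (some w) = c (some v) (some w) + if clu v = clu w then 0 else M := by
  simp only [penalizedCost, reduceCtorEq, Option.map_some, ne_eq, Option.some.injEq, false_or]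
  split_ifs <;> rfl

theorem pathCost_penalizedCost_some_cons (v : C) (t : List C) :
    pathCost (penalizedCost clu c M) (some v :: (t.map some ++ [none])) =
      pathCost c (some v :: (t.map some ++ [none])) + M * (((v :: t).map clu).changeCount + 1) := by
  induction t generalizing v with
  | nil => simp [pathCost, penalizedCost, List.changeCount]
  | cons w t ih =>
    simp only [List.map_cons, List.cons_append, pathCost] at ih ⊢
    rw [ih, penalizedCost_some_some, List.changeCount]
    split_ifs <;> push_cast <;> ring

theorem routeCost_penalizedCost {r : List C} (hr : r ≠ []) :
    routeCost (penalizedCost clu c M) r = routeCost c r + M * ((r.map clu).changeCount + 2) := by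
  obtain ⟨v, t, rfl⟩ := List.exists_cons_of_ne_nil hr
  simp only [routeCost, List.map_cons, List.cons_append, pathCost]
  rw [pathCost_penalizedCost_some_cons]
  simp only [penalizedCost, List.map_cons, reduceCtorEq, true_or, if_true]
  ring

end Penalty

namespace CluVRPFeasible

variable {C : Type*} {N m : ℕ} {Q : ℚ} {q : C → ℚ} {clu : C → Fin N} {routes : Fin m → List C}

theorem eq_of_clu_eq (h : CluVRPFeasible Q q clu routes) {i j : Fin m} {v w : C}
    (hv : v ∈ routes i) (hw : w ∈ routes j) (hvw : clu v = clu w) : i = j := by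
  obtain ⟨huniq, -, -, -, hcontig⟩ := h
  obtain ⟨k, l₁, l₂, l₃, hk, hl₂⟩ := hcontig (clu v)
  have hmem : ∀ u, clu u = clu v → u ∈ routes k := fun u hu => by simp [hk, hl₂, hu]
  exact ((huniq v).unique hv (hmem v rfl)).trans ((huniq w).unique (hmem w hvw.symm) hw)

theorem blockContiguous_map_clu (h : CluVRPFeasible Q q clu routes) (i : Fin m) :
    ((routes i).map clu).BlockContiguous := by
  obtain ⟨huniq, hnodup, -, -, hcontig⟩ := h
  intro a b hab
  obtain ⟨v, hv, rfl⟩ := List.mem_map.1 (hab.subset List.mem_cons_self)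
  obtain ⟨j, l₁, l₂, l₃, hj, hl₂⟩ := hcontig (clu v)
  obtain rfl : i = j := (huniq v).unique hv (by simp [hj, hl₂])
  have hnd := hnodup i
  rw [hj] at hnd hab
  rw [List.map_append, List.map_append] at hab
  refine List.eq_of_sublist_append_append ?_ ?_ ?_ hab
  · simp only [List.mem_map, not_exists, not_and]
    exact fun u hu hcu => List.disjoint_of_nodup_append hnd.of_append_left hu ((hl₂ u).2 hcu)
  · simpa using fun u hu => (hl₂ u).1 hu
  · simp only [List.mem_map, not_exists, not_and]
    exact fun u hu hcu => List.disjoint_of_nodup_append hnd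
      (List.mem_append_right _ ((hl₂ u).2 hcu)) hu

theorem sum_card_toFinset_map_clu (h : CluVRPFeasible Q q clu routes) (hsurj : Function.Surjective clu) :
    ∑ i, ((routes i).map clu).toFinset.card = N := by
  have hdisj : ((Finset.univ : Finset (Fin m)) : Set (Fin m)).PairwiseDisjoint
      fun i => ((routes i).map clu).toFinset := by
    intro i _ j _ hij
    simp only [Function.onFun, Finset.disjoint_left, List.mem_toFinset, List.mem_map]
    rintro _ ⟨v, hv, rfl⟩ ⟨w, hw, hwv⟩
    exact hij (h.eq_of_clu_eq hv hw hwv.symm)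
  have hcover : Finset.univ.biUnion (fun i => ((routes i).map clu).toFinset) = Finset.univ := by
    refine Finset.eq_univ_of_forall fun k => ?_
    obtain ⟨v, rfl⟩ := hsurj k
    obtain ⟨i, hi, -⟩ := h.1 v
    simpa using ⟨i, v, hi, rfl⟩
  rw [← Finset.card_biUnion hdisj, hcover, Finset.card_univ, Fintype.card_fin]

theorem solCost_penalizedCost [DecidableEq C] (h : CluVRPFeasible Q q clu routes)
    (hsurj : Function.Surjective clu) (c : Option C → Option C → ℝ) (M : ℝ) :
    solCost (penalizedCost clu c M) routes = solCost c routes + M * (m + N) := by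
  have hne : ∀ i, routes i ≠ [] := h.2.2.1
  have hroute (i : Fin m) : routeCost (penalizedCost clu c M) (routes i) =
      routeCost c (routes i) + M * (((routes i).map clu).toFinset.card + 1) := by
    rw [routeCost_penalizedCost clu c M (hne i),
      ← (h.blockContiguous_map_clu i).changeCount_add_one (by simpa using hne i)]
    push_cast
    ring
  simp only [solCost, hroute, Finset.sum_add_distrib, ← Finset.mul_sum]
  rw [← Nat.cast_sum, h.sum_card_toFinset_map_clu hsurj]
  simp only [Finset.sum_const, Finset.card_univ, Fintype.card_fin, nsmul_eq_mul, mul_one]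
  ring

end CluVRPFeasible

/-- For every feasible CluVRP solution `s` with `m` routes and `N` clusters, the
penalized cost satisfies `c^M(s) = c(s) + M·(m + N)`; hence `s` minimizes `c^M`
over feasible CluVRP solutions iff it minimizes `c`. -/
theorem penalized_cost_constant_shift {C : Type*} [DecidableEq C] {N m : ℕ}
    (Q : ℚ) (q : C → ℚ) (clu : C → Fin N) (hsurj : Function.Surjective clu)
    (c : Option C → Option C → ℝ) (M : ℝ) :
    (∀ routes : Fin m → List C, CluVRPFeasible Q q clu routes →
      solCost (penalizedCost clu c M) routes = solCost c routes + M * (m + N)) ∧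
    (∀ routes : Fin m → List C, CluVRPFeasible Q q clu routes →
      ((∀ routes' : Fin m → List C, CluVRPFeasible Q q clu routes' →
          solCost (penalizedCost clu c M) routes ≤ solCost (penalizedCost clu c M) routes') ↔
       (∀ routes' : Fin m → List C, CluVRPFeasible Q q clu routes' →
          solCost c routes ≤ solCost c routes'))) := by
  have shift (routes : Fin m → List C) (h : CluVRPFeasible Q q clu routes) :=
    h.solCost_penalizedCost hsurj c M
  refine ⟨shift, fun routes h => forall₂_congr fun routes' h' => ?_⟩
  rw [shift routes h, shift routes' h', add_le_add_iff_right]
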